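/- Let f : S → T be a minor embedding of rooted trees and suppose a, b ∈ V(S) are incomparable (no directed path between them in S). If c is any node of T lying on the path from f's image of the LCA of a and b to f(b), and f(a) lies strictly on that path, then there is a directed path from f(a) to f(b) in T; consequently such a configuration contradicts Lemma 4, so f(a) cannot be an intermediate node of the tree path from f(lca(a,b)) to f(b). -/

import Mathlib

/-- A directed path in a graph `E`, given as a nonempty list of visited nodes
from `a` to `b` (endpoints included). A trivial path is `[a]` with `a = b`. -/
def IsPath {V : Type*} (E : V → V → Prop) (p : List V) (a b : V) : Prop :=
  p.Chain' E ∧ p.head? = some a ∧ p.getLast? = some b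

/-- There is a (possibly trivial) directed path from `a` to `b`. -/
def Reach {V : Type*} (E : V → V → Prop) (a b : V) : Prop :=
  ∃ p : List V, IsPath E p a b

/-- A rooted tree: a finite directed graph with root `r` such that every node is
reachable from `r` by a unique directed path (and there are no self-loops). -/
structure IsRootedTree {V : Type*} [Fintype V] (E : V → V → Prop) (r : V) : Prop where
  no_self : ∀ v, ¬ E v v
  reach : ∀ v, ∃ p : List V, IsPath E p r v
  path_unique : ∀ v (p q : List V), IsPath E p r v → IsPath E q r v → p = q

/-- A minor embedding `f : S → T`: an injective node map such that every arc `(a,b)`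
of `S` maps to a directed path from `f a` to `f b` in `T` with no intermediate node
in the image of `f`. -/
def IsMinorEmb {V W : Type*} (ES : V → V → Prop) (ET : W → W → Prop) (f : V → W) : Prop :=
  Function.Injective f ∧
    ∀ a b, ES a b → ∃ p : List W, IsPath ET p (f a) (f b) ∧
      ∀ x ∈ p.tail.dropLast, x ∉ Set.range f

/-!
The path of `T` from `f l` to `f b` is unique, so it is the image under `f` of the path of `S`
from `l` to `b`, with every arc expanded to its subdivision path. The interior nodes of those
subdivision paths avoid the image of `f`, so every image node on the path is `f w` for a node
`w` on the path from `l` to `b`. If `f a` were on it, then `a` would lie on that path and hence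
reach `b`, contradicting incomparability.
-/

section Paths

variable {V : Type*} {E : V → V → Prop}

theorem IsPath.exists_eq_cons {p : List V} {a b : V} (h : IsPath E p a b) :
    ∃ t, p = a :: t := by
  obtain ⟨_, hh, _⟩ := h
  cases p with
  | nil => simp at hh
  | cons x t => exact ⟨t, by simpa using hh⟩

theorem IsPath.singleton (a : V) : IsPath E [a] a a :=
  ⟨List.isChain_singleton a, rfl, rfl⟩

theorem IsPath.of_cons_cons {a y b : V} {ys : List V} (h : IsPath E (a :: y :: ys) a b) :
    IsPath E (y :: ys) y b :=
  ⟨h.1.tail, rfl, by simpa [List.getLast?_cons_cons] using h.2.2⟩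

theorem IsPath.reach_of_mem {p : List V} {a b x : V} (h : IsPath E p a b) (hx : x ∈ p) :
    Reach E x b := by
  induction p generalizing a with
  | nil => simp at hx
  | cons hd tl ih =>
    obtain rfl : hd = a := by simpa using h.2.1
    rcases List.mem_cons.mp hx with rfl | hx
    · exact ⟨_, h⟩
    · cases tl with
      | nil => simp at hx
      | cons y ys => exact ih h.of_cons_cons hx

theorem IsPath.append {p q : List V} {a b c : V}
    (hp : IsPath E p a b) (hq : IsPath E q b c) : IsPath E (p ++ q.tail) a c := by
  obtain ⟨t, rfl⟩ := hq.exists_eq_cons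
  obtain ⟨pt, rfl⟩ := hp.exists_eq_cons
  cases t with
  | nil =>
    obtain rfl : b = c := by simpa using hq.2.2
    simpa using hp
  | cons y ys =>
    have hlast : (y :: ys).getLast? = some c := by
      simpa [List.getLast?_cons_cons] using hq.2.2
    refine ⟨?_, by simp, by rw [List.tail_cons, List.getLast?_append, hlast]; rfl⟩
    rw [List.tail_cons, List.Chain', List.isChain_append]
    refine ⟨hp.1, hq.1.tail, fun x hx z hz => ?_⟩
    obtain rfl : x = b := by simpa [hp.2.2, eq_comm] using hx
    obtain rfl : z = y := by simpa [eq_comm] using hz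
    exact (List.isChain_cons_cons.mp hq.1).1

theorem IsPath.mem_eq_or_mem_interior {p : List V} {a b x : V} (h : IsPath E p a b)
    (hx : x ∈ p) : x = a ∨ x = b ∨ x ∈ p.tail.dropLast := by
  obtain ⟨t, rfl⟩ := h.exists_eq_cons
  rcases List.mem_cons.mp hx with rfl | hx
  · exact Or.inl rfl
  have ht : t ≠ [] := List.ne_nil_of_mem hx
  have hlast : t.getLast ht = b := by
    obtain ⟨y, ys, rfl⟩ := List.exists_cons_of_ne_nil ht
    simpa [List.getLast?_cons_cons, List.getLast?_eq_some_getLast] using h.2.2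
  rw [← List.dropLast_append_getLast ht, List.mem_append, List.mem_singleton, hlast] at hx
  rcases hx with hx | rfl
  · exact Or.inr (Or.inr hx)
  · exact Or.inr (Or.inl rfl)

end Paths

theorem IsRootedTree.isPath_unique {V : Type*} [Fintype V] {E : V → V → Prop} {r : V}
    (hT : IsRootedTree E r) {u v : V} {p q : List V}
    (hp : IsPath E p u v) (hq : IsPath E q u v) : p = q := by
  obtain ⟨P, hP⟩ := hT.reach u
  have htail : p.tail = q.tail :=
    List.append_cancel_left (hT.path_unique v _ _ (hP.append hp) (hP.append hq))
  obtain ⟨_, rfl⟩ := hp.exists_eq_cons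
  obtain ⟨_, rfl⟩ := hq.exists_eq_cons
  simpa using htail

theorem IsMinorEmb.exists_isPath_image {VS VT : Type*} {ES : VS → VS → Prop}
    {ET : VT → VT → Prop} {f : VS → VT} (hf : IsMinorEmb ES ET f)
    {q : List VS} {u v : VS} (hq : IsPath ES q u v) :
    ∃ p, IsPath ET p (f u) (f v) ∧ ∀ x ∈ p, x ∈ Set.range f → x ∈ q.map f := by
  induction q generalizing u with
  | nil => simp [IsPath] at hq
  | cons hd tl ih =>
    obtain rfl : hd = u := by simpa using hq.2.1
    cases tl with
    | nil =>
      obtain rfl : hd = v := by simpa using hq.2.2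
      exact ⟨[f hd], IsPath.singleton _, fun x hx _ => by simpa using hx⟩
    | cons y ys =>
      obtain ⟨p', hp', himg⟩ := ih hq.of_cons_cons
      obtain ⟨s, hs, hs_int⟩ := hf.2 hd y (List.isChain_cons_cons.mp hq.1).1
      refine ⟨s ++ p'.tail, hs.append hp', fun x hx hxf => ?_⟩
      rcases List.mem_append.mp hx with hx | hx
      · rcases hs.mem_eq_or_mem_interior hx with rfl | rfl | hint
        · simp
        · simp
        · exact absurd hxf (hs_int x hint)
      · obtain ⟨_, rfl⟩ := hp'.exists_eq_cons
        exact List.mem_cons_of_mem _ (himg x (List.mem_cons_of_mem _ hx) hxf)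

theorem stmt19_general {VS VT : Type*} [Fintype VT]
    (ES : VS → VS → Prop) (ET : VT → VT → Prop) (rT : VT)
    (hT : IsRootedTree ET rT)
    (f : VS → VT) (hf : IsMinorEmb ES ET f)
    (a b l : VS)
    (hab : ¬ Reach ES a b)
    (hlb : Reach ES l b)
    (p : List VT) (hp : IsPath ET p (f l) (f b)) :
    (f a ∈ p.tail.dropLast → Reach ET (f a) (f b)) ∧ f a ∉ p.tail.dropLast := by
  have hmem : f a ∈ p.tail.dropLast → f a ∈ p := fun h =>
    (List.tail_sublist p).subset ((List.dropLast_sublist _).subset h)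
  refine ⟨fun h => hp.reach_of_mem (hmem h), fun h => hab ?_⟩
  obtain ⟨q, hq⟩ := hlb
  obtain ⟨p', hp', himg⟩ := hf.exists_isPath_image hq
  obtain rfl : p = p' := hT.isPath_unique hp hp'
  have ha : f a ∈ q.map f := himg _ (hmem h) ⟨a, rfl⟩
  exact hq.reach_of_mem ((List.mem_map_of_injective hf.1).1 ha)

/-- Let `f : S → T` be a minor embedding and let `a, b` be incomparable nodes of
`S` with lowest common ancestor `l`. For any path `p` in `T` from `f l` to `f b`:
if `f a` were an intermediate node of `p` then there would be a directed path from
`f a` to `f b` in `T`; consequently (by Lemma 4) `f a` cannot be an intermediate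
node of `p`. -/
theorem stmt19 {VS VT : Type*} [Fintype VS] [Fintype VT]
    (ES : VS → VS → Prop) (rS : VS) (ET : VT → VT → Prop) (rT : VT)
    (hS : IsRootedTree ES rS) (hT : IsRootedTree ET rT)
    (f : VS → VT) (hf : IsMinorEmb ES ET f)
    (a b l : VS)
    (hab : ¬ Reach ES a b) (hba : ¬ Reach ES b a)
    (hla : Reach ES l a) (hlb : Reach ES l b)
    (hlca : ∀ d : VS, Reach ES d a → Reach ES d b → Reach ES d l)
    (p : List VT) (hp : IsPath ET p (f l) (f b)) :
    (f a ∈ p.tail.dropLast → Reach ET (f a) (f b)) ∧ f a ∉ p.tail.dropLast :=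
  stmt19_general ES ET rT hT f hf a b l hab hlb p hp
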